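/- (Theorem 5: open-loop solvability implies weak closed-loop solvability.) Suppose N ≥ 2 and Problem (LQ) is open-loop solvable (for every initial value x₀ there exists an open-loop optimal control). Then there exist matrices K*_t ∈ ℝ^{m×n} for t ∈ {0,…,N−2}, independent of the initial value, such that for every x₀ ∈ ℝⁿ there is an open-loop optimal control u* for x₀ whose state x* (x*₀ = x₀, x*_{t+1} = A_t x*_t + B_t u*_t) satisfies the linear feedback relation u*_t = K*_t x*_t for every t ∈ {0,…,N−2}. -/

import Mathlib

open Matrix Finset

noncomputable section

/-- State trajectory of the discrete-time linear system `x_{t+1} = A_t x_t + B_t u_t`. -/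
def lqState {n m : ℕ} (A : ℕ → Matrix (Fin n) (Fin n) ℝ) (B : ℕ → Matrix (Fin n) (Fin m) ℝ)
    (x₀ : Fin n → ℝ) (u : ℕ → Fin m → ℝ) : ℕ → Fin n → ℝ
  | 0 => x₀
  | t + 1 => A t *ᵥ lqState A B x₀ u t + B t *ᵥ u t

/-- Quadratic cost `J(x₀, u)`. -/
def lqCost {n m : ℕ} (N : ℕ) (A : ℕ → Matrix (Fin n) (Fin n) ℝ)
    (B : ℕ → Matrix (Fin n) (Fin m) ℝ) (Q : ℕ → Matrix (Fin n) (Fin n) ℝ)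
    (R : ℕ → Matrix (Fin m) (Fin m) ℝ) (S : ℕ → Matrix (Fin m) (Fin n) ℝ)
    (H : Matrix (Fin n) (Fin n) ℝ) (x₀ : Fin n → ℝ) (u : ℕ → Fin m → ℝ) : ℝ :=
  (∑ t ∈ range N,
      (lqState A B x₀ u t ⬝ᵥ Q t *ᵥ lqState A B x₀ u t
        + 2 * (u t ⬝ᵥ S t *ᵥ lqState A B x₀ u t)
        + u t ⬝ᵥ R t *ᵥ u t))
    + lqState A B x₀ u N ⬝ᵥ H *ᵥ lqState A B x₀ u N

/-! Open-loop solvability forces `J(0, ·) ≥ 0`, so `J(x₀, ·)` is a convex quadratic and optimality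
of `u` for `x₀` is a linear first-order condition: the optimal pairs `(x₀, u)` form a subspace
projecting onto all initial values. Selecting, linearly in `x₀`, the optimal control orthogonal to
the optimal controls for `x₀ = 0` (the one of minimal norm) gives `u*`. If `x*_t = 0`, cutting `u*`
off at time `t` splits the cost as `J(x₀, u*) = J(x₀, u*·1_{<t}) + J(0, u*·1_{≥t})`, so the
truncated control is again optimal and not longer than `u*`, hence equal to it: `u*_t = 0`. Thus the
linear map `x₀ ↦ u*_t` vanishes on the kernel of `x₀ ↦ x*_t`, and factors as `u*_t = K*_t x*_t`. -/

theorem LinearMap.exists_eq_comp_of_ker_le {K V W U : Type*} [Field K] [AddCommGroup V]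
    [Module K V] [AddCommGroup W] [Module K W] [AddCommGroup U] [Module K U]
    (φ : V →ₗ[K] W) (ψ : V →ₗ[K] U) (h : LinearMap.ker φ ≤ LinearMap.ker ψ) :
    ∃ κ : W →ₗ[K] U, ψ = κ ∘ₗ φ := by
  obtain ⟨s, hs⟩ := φ.rangeRestrict.exists_rightInverse_of_surjective φ.range_rangeRestrict
  obtain ⟨κ, hκ⟩ := LinearMap.exists_extend (ψ ∘ₗ s)
  refine ⟨κ, LinearMap.ext fun x => ?_⟩
  have hφ : φ (s (φ.rangeRestrict x)) = φ x :=
    congrArg Subtype.val (LinearMap.congr_fun hs (φ.rangeRestrict x))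
  have hψ : ψ (s (φ.rangeRestrict x)) = ψ x := by
    rw [← sub_eq_zero, ← map_sub]
    exact h (by rw [LinearMap.mem_ker, map_sub, hφ, sub_self])
  rw [← hψ, LinearMap.comp_apply, ← LinearMap.comp_apply ψ, ← hκ]
  rfl

theorem Submodule.exists_linearMap_forall_mem_of_forall_exists {K V U : Type*} [Field K]
    [AddCommGroup V] [Module K V] [AddCommGroup U] [Module K U] (P : Submodule K (V × U))
    (hP : ∀ x, ∃ u, (x, u) ∈ P) : ∃ σ : V →ₗ[K] U, ∀ x, (x, σ x) ∈ P := by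
  have hsurj : LinearMap.range (LinearMap.fst K V U ∘ₗ P.subtype) = ⊤ :=
    LinearMap.range_eq_top.2 fun x => by
      obtain ⟨u, hu⟩ := hP x
      exact ⟨⟨(x, u), hu⟩, rfl⟩
  obtain ⟨g, hg⟩ := LinearMap.exists_rightInverse_of_surjective _ hsurj
  refine ⟨LinearMap.snd K V U ∘ₗ P.subtype ∘ₗ g, fun x => ?_⟩
  have hx : ((g x : V × U)).1 = x := LinearMap.congr_fun hg x
  have : (x, (g x : V × U).2) = g x := Prod.ext hx.symm rfl
  exact this ▸ (g x).2

namespace Submodule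

variable {V U : Type*} [AddCommGroup V] [Module ℝ V] [NormedAddCommGroup U]
  [InnerProductSpace ℝ U] (P : Submodule ℝ (V × U))

theorem exists_linearMap_forall_mem_orthogonal
    [(P.comap (LinearMap.inr ℝ V U)).HasOrthogonalProjection] (hP : ∀ x, ∃ u, (x, u) ∈ P) :
    ∃ σ : V →ₗ[ℝ] U, ∀ x, (x, σ x) ∈ P ∧ σ x ∈ (P.comap (LinearMap.inr ℝ V U))ᗮ := by
  set K := P.comap (LinearMap.inr ℝ V U)
  obtain ⟨σ, hσ⟩ := P.exists_linearMap_forall_mem_of_forall_exists hP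
  refine ⟨σ - K.starProjection.toLinearMap ∘ₗ σ, fun x =>
    ⟨?_, K.sub_starProjection_mem_orthogonal _⟩⟩
  have hK : (0, K.starProjection (σ x)) ∈ P := K.starProjection_apply_mem (σ x)
  simpa using P.sub_mem (hσ x) hK

theorem eq_of_norm_le_of_mem_orthogonal {x : V} {u u' : U} (hu : (x, u) ∈ P)
    (horth : u ∈ (P.comap (LinearMap.inr ℝ V U))ᗮ) (hu' : (x, u') ∈ P) (hnorm : ‖u'‖ ≤ ‖u‖) :
    u' = u := by
  have hK : u' - u ∈ P.comap (LinearMap.inr ℝ V U) := by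
    simpa using P.sub_mem hu' hu
  have hpyth := norm_add_sq_eq_norm_sq_add_norm_sq_real
    (Submodule.inner_right_of_mem_orthogonal hK horth)
  rw [sub_add_cancel] at hpyth
  have : ‖u' - u‖ * ‖u' - u‖ = 0 := by
    nlinarith [norm_nonneg u, norm_nonneg u', mul_self_nonneg ‖u' - u‖]
  simpa [sub_eq_zero] using this

end Submodule

theorem nonneg_and_eq_zero_of_forall_quadratic_nonneg {a b : ℝ}
    (h : ∀ c : ℝ, 0 ≤ a * (c * c) + b * c) :
    0 ≤ a ∧ b = 0 := by
  refine ⟨by linarith [h 1, h (-1)], ?_⟩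
  have := discrim_le_zero (K := ℝ) (c := 0) fun c => by simpa using h c
  simp only [discrim, mul_zero, sub_zero] at this
  exact pow_eq_zero_iff two_ne_zero |>.1 (le_antisymm this (sq_nonneg b))

namespace QuadraticMap

variable {V U : Type*} [AddCommGroup V] [Module ℝ V] [AddCommGroup U] [Module ℝ U]
  (q : QuadraticMap ℝ (V × U) ℝ)

/-- The pairs satisfying the first-order condition; when `0 ≤ q (0, ·)` these are exactly the
optimal pairs, see `forall_le_iff_mem_optimalPairs`. -/
def optimalPairs : Submodule ℝ (V × U) :=
  LinearMap.ker ((polarBilin q).compl₂ (LinearMap.inr ℝ V U))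

theorem mem_optimalPairs {p : V × U} : p ∈ q.optimalPairs ↔ ∀ v, polar q p (0, v) = 0 := by
  simp [optimalPairs, LinearMap.ext_iff]

theorem map_prod_add_smul (x : V) (u v : U) (c : ℝ) :
    q (x, u + c • v) = q (x, u) + q (0, v) * (c * c) + polar q (x, u) (0, v) * c := by
  have hsplit : (x, u + c • v) = (x, u) + c • (0, v) := by simp
  rw [hsplit, QuadraticMap.map_add q, q.map_smul, polar_smul_right, smul_eq_mul, smul_eq_mul]
  ring

theorem forall_le_iff_forall_quadratic_nonneg (x : V) (u : U) :
    (∀ w, q (x, u) ≤ q (x, w)) ↔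
      ∀ v (c : ℝ), 0 ≤ q (0, v) * (c * c) + polar q (x, u) (0, v) * c := by
  refine ⟨fun h v c => ?_, fun h w => ?_⟩
  · linarith [h (u + c • v), q.map_prod_add_smul x u v c]
  · have := q.map_prod_add_smul x u (w - u) 1
    simp only [one_smul, add_sub_cancel, mul_one] at this
    linarith [h (w - u) 1]

theorem nonneg_of_forall_exists_forall_le (h : ∀ x, ∃ u, ∀ w, q (x, u) ≤ q (x, w)) (v : U) :
    0 ≤ q (0, v) := by
  obtain ⟨u, hu⟩ := h 0
  exact (nonneg_and_eq_zero_of_forall_quadratic_nonneg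
    ((q.forall_le_iff_forall_quadratic_nonneg 0 u).1 hu v)).1

theorem forall_le_iff_mem_optimalPairs (h : ∀ v, 0 ≤ q (0, v)) (x : V) (u : U) :
    (∀ w, q (x, u) ≤ q (x, w)) ↔ (x, u) ∈ q.optimalPairs := by
  rw [forall_le_iff_forall_quadratic_nonneg, mem_optimalPairs]
  refine ⟨fun H v => (nonneg_and_eq_zero_of_forall_quadratic_nonneg (H v)).2, fun H v c => ?_⟩
  rw [H v, zero_mul, add_zero]
  exact mul_nonneg (h v) (mul_self_nonneg c)

end QuadraticMap

section LQ

variable {n m : ℕ} (N : ℕ) (A : ℕ → Matrix (Fin n) (Fin n) ℝ) (B : ℕ → Matrix (Fin n) (Fin m) ℝ)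

def lqStateₗ : ℕ → ((Fin n → ℝ) × (ℕ → Fin m → ℝ)) →ₗ[ℝ] (Fin n → ℝ)
  | 0 => LinearMap.fst ℝ _ _
  | t + 1 => toLin' (A t) ∘ₗ lqStateₗ t + toLin' (B t) ∘ₗ LinearMap.proj t ∘ₗ LinearMap.snd ℝ _ _

theorem lqStateₗ_apply (t : ℕ) (x₀ : Fin n → ℝ) (u : ℕ → Fin m → ℝ) :
    lqStateₗ A B t (x₀, u) = lqState A B x₀ u t := by
  induction t with
  | zero => rfl
  | succ t ih => simp [lqStateₗ, lqState, ih]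

theorem lqState_zero_zero (t : ℕ) : lqState A B (0 : Fin n → ℝ) (0 : ℕ → Fin m → ℝ) t = 0 := by
  rw [← lqStateₗ_apply, Prod.mk_zero_zero, map_zero]

theorem lqState_eq_of_eq {x₀ y₀ : Fin n → ℝ} {u v : ℕ → Fin m → ℝ} {t r : ℕ} (htr : t ≤ r)
    (ht : lqState A B x₀ u t = lqState A B y₀ v t) (huv : ∀ s, t ≤ s → s < r → u s = v s) :
    lqState A B x₀ u r = lqState A B y₀ v r := by
  induction r, htr using Nat.le_induction with
  | base => exact ht
  | succ r htr ih =>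
    simp only [lqState]
    rw [ih fun s hts hsr => huv s hts (hsr.trans r.lt_succ_self), huv r htr r.lt_succ_self]

variable (Q : ℕ → Matrix (Fin n) (Fin n) ℝ) (R : ℕ → Matrix (Fin m) (Fin m) ℝ)
  (S : ℕ → Matrix (Fin m) (Fin n) ℝ) (H : Matrix (Fin n) (Fin n) ℝ)

def lqCostForm : QuadraticMap ℝ ((Fin n → ℝ) × (ℕ → Fin m → ℝ)) ℝ :=
  let x t := lqStateₗ A B t
  let u t : ((Fin n → ℝ) × (ℕ → Fin m → ℝ)) →ₗ[ℝ] (Fin m → ℝ) :=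
    LinearMap.proj t ∘ₗ LinearMap.snd ℝ _ _
  LinearMap.BilinMap.toQuadraticMap <|
    (∑ t ∈ range N,
      ((toLinearMap₂' ℝ (Q t)).compl₁₂ (x t) (x t)
        + (2 : ℝ) • (toLinearMap₂' ℝ (S t)).compl₁₂ (u t) (x t)
        + (toLinearMap₂' ℝ (R t)).compl₁₂ (u t) (u t)))
    + (toLinearMap₂' ℝ H).compl₁₂ (x N) (x N)

theorem lqCostForm_apply (x₀ : Fin n → ℝ) (u : ℕ → Fin m → ℝ) :
    lqCostForm N A B Q R S H (x₀, u) = lqCost N A B Q R S H x₀ u := by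
  simp [lqCostForm, lqCost, LinearMap.BilinMap.toQuadraticMap_apply,
    toLinearMap₂'_apply', lqStateₗ_apply]

theorem lqCost_congr (x₀ : Fin n → ℝ) {u v : ℕ → Fin m → ℝ} (huv : ∀ t < N, u t = v t) :
    lqCost N A B Q R S H x₀ u = lqCost N A B Q R S H x₀ v := by
  have hstate : ∀ t ≤ N, lqState A B x₀ u t = lqState A B x₀ v t := fun t ht =>
    lqState_eq_of_eq A B t.zero_le rfl fun s _ hs => huv s (hs.trans_le ht)
  unfold lqCost
  rw [hstate N le_rfl]
  congr 1
  refine sum_congr rfl fun t ht => ?_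
  rw [hstate t (mem_range.1 ht).le, huv t (mem_range.1 ht)]

theorem lqCost_split_of_lqState_eq_zero (x₀ : Fin n → ℝ) (u : ℕ → Fin m → ℝ) {t : ℕ}
    (htN : t ≤ N) (ht : lqState A B x₀ u t = 0) :
    lqCost N A B Q R S H x₀ u =
      lqCost N A B Q R S H x₀ (fun s => if s < t then u s else 0)
        + lqCost N A B Q R S H 0 (fun s => if s < t then 0 else u s) := by
  set u₁ : ℕ → Fin m → ℝ := fun s => if s < t then u s else 0
  set u₂ : ℕ → Fin m → ℝ := fun s => if s < t then 0 else u s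
  have hbefore : ∀ s ≤ t, lqState A B x₀ u₁ s = lqState A B x₀ u s ∧ lqState A B 0 u₂ s = 0 :=
    fun s hs => ⟨lqState_eq_of_eq A B s.zero_le rfl fun r _ hr => if_pos (hr.trans_le hs),
      (lqState_eq_of_eq A B (u := u₂) (v := 0) s.zero_le rfl fun r _ hr =>
        if_pos (hr.trans_le hs)).trans (lqState_zero_zero A B s)⟩
  have hafter : ∀ s ≥ t, lqState A B x₀ u₁ s = 0 ∧ lqState A B 0 u₂ s = lqState A B x₀ u s :=
    fun s hs => ⟨(lqState_eq_of_eq A B (u := u₁) (y₀ := 0) (v := 0) hs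
        (by rw [(hbefore t le_rfl).1, ht, lqState_zero_zero]) fun r hr _ => if_neg hr.not_gt).trans
        (lqState_zero_zero A B s),
      lqState_eq_of_eq A B (u := u₂) hs (by rw [(hbefore t le_rfl).2, ht]) fun r hr _ =>
        if_neg hr.not_gt⟩
  unfold lqCost
  rw [add_add_add_comm, ← sum_add_distrib, (hafter N htN).1, (hafter N htN).2, zero_dotProduct,
    zero_add]
  congr 1
  refine sum_congr rfl fun s _ => ?_
  by_cases hs : s < t
  · simp [u₁, u₂, hs, (hbefore s hs.le).1, (hbefore s hs.le).2]
  · simp [u₁, u₂, hs, (hafter s (not_lt.1 hs)).1, (hafter s (not_lt.1 hs)).2]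

/-- Controls on the horizon `N` form a finite-dimensional Euclidean space, where the optimal
control of minimal norm exists. -/
def extendControl : EuclideanSpace ℝ (Fin N × Fin m) →ₗ[ℝ] ℕ → Fin m → ℝ where
  toFun e s j := if h : s < N then e (⟨s, h⟩, j) else 0
  map_add' e f := by ext s j; by_cases h : s < N <;> simp [h]
  map_smul' c e := by ext s j; by_cases h : s < N <;> simp [h]

def restrictControl (u : ℕ → Fin m → ℝ) : EuclideanSpace ℝ (Fin N × Fin m) :=
  WithLp.toLp 2 fun p => u p.1 p.2

def truncateControl (t : ℕ) (e : EuclideanSpace ℝ (Fin N × Fin m)) :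
    EuclideanSpace ℝ (Fin N × Fin m) :=
  WithLp.toLp 2 fun p => if (p.1 : ℕ) < t then e p else 0

theorem extendControl_of_le (e : EuclideanSpace ℝ (Fin N × Fin m)) {s : ℕ} (hs : N ≤ s) :
    extendControl N e s = 0 := by
  ext j
  simp [extendControl, hs.not_gt]

theorem extendControl_restrictControl_of_lt (u : ℕ → Fin m → ℝ) {s : ℕ} (hs : s < N) :
    extendControl N (restrictControl N u) s = u s := by
  ext j
  simp [extendControl, restrictControl, hs]

theorem extendControl_truncateControl (t : ℕ) (e : EuclideanSpace ℝ (Fin N × Fin m)) :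
    extendControl N (truncateControl N t e) =
      fun s => if s < t then extendControl N e s else 0 := by
  ext s j
  by_cases hs : s < N <;> by_cases ht : s < t <;> simp [extendControl, truncateControl, hs, ht]

theorem norm_truncateControl_le (t : ℕ) (e : EuclideanSpace ℝ (Fin N × Fin m)) :
    ‖truncateControl N t e‖ ≤ ‖e‖ := by
  rw [EuclideanSpace.norm_eq, EuclideanSpace.norm_eq]
  refine Real.sqrt_le_sqrt (sum_le_sum fun p _ => ?_)
  by_cases hp : (p.1 : ℕ) < t <;> simp [truncateControl, hp, sq_nonneg]

def lqCostFormEuclidean : QuadraticMap ℝ ((Fin n → ℝ) × EuclideanSpace ℝ (Fin N × Fin m)) ℝ :=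
  (lqCostForm N A B Q R S H).comp (LinearMap.prodMap LinearMap.id (extendControl N))

theorem lqCostFormEuclidean_apply (x₀ : Fin n → ℝ) (e : EuclideanSpace ℝ (Fin N × Fin m)) :
    lqCostFormEuclidean N A B Q R S H (x₀, e) = lqCost N A B Q R S H x₀ (extendControl N e) :=
  lqCostForm_apply N A B Q R S H x₀ _

theorem forall_le_lqCostFormEuclidean_iff (x₀ : Fin n → ℝ) (e : EuclideanSpace ℝ (Fin N × Fin m)) :
    (∀ w, lqCostFormEuclidean N A B Q R S H (x₀, e) ≤ lqCostFormEuclidean N A B Q R S H (x₀, w)) ↔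
      ∀ u, lqCost N A B Q R S H x₀ (extendControl N e) ≤ lqCost N A B Q R S H x₀ u := by
  simp only [lqCostFormEuclidean_apply]
  refine ⟨fun h u => ?_, fun h w => h _⟩
  rw [lqCost_congr N A B Q R S H x₀ fun s hs => (extendControl_restrictControl_of_lt N u hs).symm]
  exact h _

theorem extendControl_eq_zero_of_lqState_eq_zero (h0 : ∀ v, 0 ≤ lqCost N A B Q R S H 0 v)
    {x₀ : Fin n → ℝ} {e : EuclideanSpace ℝ (Fin N × Fin m)}
    (he : (x₀, e) ∈ (lqCostFormEuclidean N A B Q R S H).optimalPairs)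
    (horth : e ∈ ((lqCostFormEuclidean N A B Q R S H).optimalPairs.comap (LinearMap.inr ℝ _ _))ᗮ)
    {t : ℕ} (ht : lqState A B x₀ (extendControl N e) t = 0) :
    extendControl N e t = 0 := by
  rcases le_or_gt N t with hNt | htN
  · exact extendControl_of_le N e hNt
  -- the truncation of `e` at `t` is optimal as well, and `e` is the optimal control of least norm
  set q := lqCostFormEuclidean N A B Q R S H
  have hq0 : ∀ w, 0 ≤ q (0, w) := fun w => (lqCostFormEuclidean_apply N A B Q R S H 0 w) ▸ h0 _
  have hsplit := lqCost_split_of_lqState_eq_zero N A B Q R S H x₀ _ htN.le ht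
  rw [← extendControl_truncateControl] at hsplit
  have hmin := (forall_le_lqCostFormEuclidean_iff N A B Q R S H x₀ e).1
    ((q.forall_le_iff_mem_optimalPairs hq0 x₀ e).2 he)
  have he' : (x₀, truncateControl N t e) ∈ q.optimalPairs := by
    rw [← q.forall_le_iff_mem_optimalPairs hq0, forall_le_lqCostFormEuclidean_iff]
    intro u
    linarith [hmin u, h0 fun s => if s < t then 0 else extendControl N e s]
  rw [← q.optimalPairs.eq_of_norm_le_of_mem_orthogonal he horth he' (norm_truncateControl_le N t e),
    extendControl_truncateControl]
  exact if_neg (lt_irrefl t)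

end LQ

theorem stmt_15_general {n m : ℕ} (N : ℕ)
    (A : ℕ → Matrix (Fin n) (Fin n) ℝ) (B : ℕ → Matrix (Fin n) (Fin m) ℝ)
    (Q : ℕ → Matrix (Fin n) (Fin n) ℝ) (R : ℕ → Matrix (Fin m) (Fin m) ℝ)
    (S : ℕ → Matrix (Fin m) (Fin n) ℝ) (H : Matrix (Fin n) (Fin n) ℝ)
    (hsolv : ∀ x₀ : Fin n → ℝ, ∃ ubar : ℕ → Fin m → ℝ, ∀ u : ℕ → Fin m → ℝ,
      lqCost N A B Q R S H x₀ ubar ≤ lqCost N A B Q R S H x₀ u) :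
    ∃ Kstar : ℕ → Matrix (Fin m) (Fin n) ℝ,
      ∀ x₀ : Fin n → ℝ, ∃ ustar : ℕ → Fin m → ℝ,
        (∀ u : ℕ → Fin m → ℝ,
          lqCost N A B Q R S H x₀ ustar ≤ lqCost N A B Q R S H x₀ u) ∧
        ∀ t < N - 1, ustar t = Kstar t *ᵥ lqState A B x₀ ustar t := by
  set q := lqCostFormEuclidean N A B Q R S H
  have h0 : ∀ v, 0 ≤ lqCost N A B Q R S H 0 v := fun v => by
    simpa only [lqCostForm_apply] using (lqCostForm N A B Q R S H).nonneg_of_forall_exists_forall_le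
      (by simpa only [Prod.forall, lqCostForm_apply] using hsolv) v
  have hq0 : ∀ e, 0 ≤ q (0, e) := fun e => (lqCostFormEuclidean_apply N A B Q R S H 0 e) ▸ h0 _
  have hP : ∀ x₀, ∃ e, (x₀, e) ∈ q.optimalPairs := fun x₀ => by
    obtain ⟨u, hu⟩ := hsolv x₀
    refine ⟨restrictControl N u, (q.forall_le_iff_mem_optimalPairs hq0 _ _).1 ?_⟩
    rw [forall_le_lqCostFormEuclidean_iff, lqCost_congr N A B Q R S H x₀
      fun s hs => extendControl_restrictControl_of_lt N u hs]
    exact hu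
  obtain ⟨σ, hσ⟩ := q.optimalPairs.exists_linearMap_forall_mem_orthogonal hP
  set ustar := extendControl N ∘ₗ σ
  have hfactor : ∀ t, ∃ κ : (Fin n → ℝ) →ₗ[ℝ] (Fin m → ℝ),
      LinearMap.proj t ∘ₗ ustar = κ ∘ₗ lqStateₗ A B t ∘ₗ LinearMap.id.prod ustar :=
    fun t => LinearMap.exists_eq_comp_of_ker_le _ _ fun x₀ hx =>
      extendControl_eq_zero_of_lqState_eq_zero N A B Q R S H h0 (hσ x₀).1 (hσ x₀).2
        (by simpa [ustar, lqStateₗ_apply] using hx)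
  choose κ hκ using hfactor
  refine ⟨fun t => LinearMap.toMatrix' (κ t), fun x₀ => ⟨ustar x₀, ?_, fun t _ => ?_⟩⟩
  · exact (forall_le_lqCostFormEuclidean_iff N A B Q R S H x₀ _).1
      ((q.forall_le_iff_mem_optimalPairs hq0 _ _).2 (hσ x₀).1)
  · rw [← Matrix.toLin'_apply, Matrix.toLin'_toMatrix']
    simpa [lqStateₗ_apply] using LinearMap.congr_fun (hκ t) x₀

/-- Theorem 5: open-loop solvability implies weak closed-loop solvability:
there are gains `K*_t` (t ∈ {0,…,N−2}), independent of the initial value, such that every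
initial value admits an open-loop optimal control in linear feedback form `u*_t = K*_t x*_t`
for all `t ∈ {0,…,N−2}`. -/
theorem stmt_15 {n m : ℕ} (hn : 0 < n) (hm : 0 < m) (N : ℕ) (hN : 2 ≤ N)
    (A : ℕ → Matrix (Fin n) (Fin n) ℝ) (B : ℕ → Matrix (Fin n) (Fin m) ℝ)
    (Q : ℕ → Matrix (Fin n) (Fin n) ℝ) (R : ℕ → Matrix (Fin m) (Fin m) ℝ)
    (S : ℕ → Matrix (Fin m) (Fin n) ℝ) (H : Matrix (Fin n) (Fin n) ℝ)
    (hQ : ∀ t, (Q t).IsSymm) (hR : ∀ t, (R t).IsSymm) (hH : H.IsSymm)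
    (hsolv : ∀ x₀ : Fin n → ℝ, ∃ ubar : ℕ → Fin m → ℝ, ∀ u : ℕ → Fin m → ℝ,
      lqCost N A B Q R S H x₀ ubar ≤ lqCost N A B Q R S H x₀ u) :
    ∃ Kstar : ℕ → Matrix (Fin m) (Fin n) ℝ,
      ∀ x₀ : Fin n → ℝ, ∃ ustar : ℕ → Fin m → ℝ,
        (∀ u : ℕ → Fin m → ℝ,
          lqCost N A B Q R S H x₀ ustar ≤ lqCost N A B Q R S H x₀ u) ∧
        ∀ t < N - 1, ustar t = Kstar t *ᵥ lqState A B x₀ ustar t :=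
  stmt_15_general N A B Q R S H hsolv
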